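/- In an interdependent network where every IDR has the form a ← b (single minterm of size one, each entity on at most one right-hand side), the sets of entities protected by adding an auxiliary disjunct to different IDRs whose left-hand-side entities lie in different trees of the dependency forest are disjoint, so the greedy algorithm that repeatedly picks the IDR protecting the most entities yields an optimal solution to AEAP. -/
import Mathlib


open scoped Classical

/-- Cascade in a network where every IDR has the form `a ← b` (a single
minterm of size one), encoded by `parent a = some b`, after the IDRs of the
entities in `C` have each received a never-failing auxiliary disjunct (so the
entities of `C` never fail by induced failure):
`F 0 = K`, `F (t+1) = F t ∪ {a ∉ C : parent a ∈ F t}`. -/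
noncomputable def pcascade {E : Type} [Fintype E] (parent : E → Option E)
    (C K : Finset E) : ℕ → Finset E
  | 0 => K
  | t + 1 =>
      pcascade parent C K t ∪
        Finset.univ.filter fun a =>
          a ∉ C ∧ ∃ b, parent a = some b ∧ b ∈ pcascade parent C K t

/-- The final failure set (the cascade stabilizes by step `|E|`). -/
noncomputable def pfinal {E : Type} [Fintype E] (parent : E → Option E)
    (C K : Finset E) : Finset E :=
  pcascade parent C K (Fintype.card E)

/-- The set of entities protected from induced failure by adding an auxiliary
disjunct to the IDR of each entity of `C`. -/
noncomputable def pProt {E : Type} [Fintype E] (parent : E → Option E)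
    (K C : Finset E) : Finset E :=
  pfinal parent ∅ K \ pfinal parent C K

/-- `b` is an ancestor of `a` in the dependency forest (there is a directed
path `b → ⋯ → a` along edges `parent v = some u`, i.e. `v ← u`). -/
def pAnc {E : Type} (parent : E → Option E) (b a : E) : Prop :=
  Relation.ReflTransGen (fun u v : E => parent v = some u) b a

/-- Iterated parent. -/
def pit {E : Type} (parent : E → Option E) : ℕ → E → Option E
  | 0, v => some v
  | n + 1, v => (parent v).bind (pit parent n)

theorem pit_add {E : Type} (parent : E → Option E) (m n : ℕ) (v : E) :
    pit parent (m + n) v = (pit parent m v).bind (pit parent n) := by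
  induction m generalizing v with
  | zero => simp [pit]
  | succ m ih =>
      have hmn : m + 1 + n = (m + n) + 1 := by omega
      rw [hmn]
      simp only [pit]
      cases parent v with
      | none => simp
      | some b => simp [ih b]

theorem pit_isSome {E : Type} (parent : E → Option E) {n : ℕ} {v k : E}
    (h : pit parent n v = some k) {i : ℕ} (hi : i ≤ n) :
    ∃ w, pit parent i v = some w := by
  have hn : i + (n - i) = n := by omega
  rw [← hn, pit_add] at h
  cases hw : pit parent i v with
  | none => rw [hw] at h; simp at h
  | some w => exact ⟨w, rfl⟩

theorem pAnc_of_pit {E : Type} (parent : E → Option E) :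
    ∀ (m : ℕ) (v x : E), pit parent m v = some x → pAnc parent x v := by
  intro m
  induction m with
  | zero =>
      intro v x h
      simp only [pit] at h
      cases h
      exact Relation.ReflTransGen.refl
  | succ m ih =>
      intro v x h
      simp only [pit] at h
      cases hb : parent v with
      | none => rw [hb] at h; simp at h
      | some b =>
          rw [hb, Option.bind_some] at h
          exact Relation.ReflTransGen.tail (ih b x h) hb

/-- Reachability of `v` from `K` avoiding `C`. -/
def Reach {E : Type} (parent : E → Option E) (C K : Finset E) (v : E) : Prop :=
  ∃ n k, pit parent n v = some k ∧ k ∈ K ∧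
    ∀ i < n, ∀ w, pit parent i v = some w → w ∉ C

theorem reach_mono {E : Type} (parent : E → Option E) {C C' K : Finset E} {v : E}
    (hCC : C' ⊆ C) (h : Reach parent C K v) : Reach parent C' K v := by
  obtain ⟨n, k, h1, h2, h3⟩ := h
  exact ⟨n, k, h1, h2, fun i hi w hw hwC => h3 i hi w hw (hCC hwC)⟩

theorem mem_pcascade {E : Type} [Fintype E] (parent : E → Option E)
    (C K : Finset E) (t : ℕ) (v : E) :
    v ∈ pcascade parent C K t ↔
      ∃ n ≤ t, ∃ k, pit parent n v = some k ∧ k ∈ K ∧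
        ∀ i < n, ∀ w, pit parent i v = some w → w ∉ C := by
  induction t generalizing v with
  | zero =>
      simp only [pcascade]
      constructor
      · intro hv
        exact ⟨0, le_refl 0, v, rfl, hv, by omega⟩
      · rintro ⟨n, hn, k, h1, h2, -⟩
        interval_cases n
        simp only [pit] at h1
        cases h1
        exact h2
  | succ t ih =>
      simp only [pcascade, Finset.mem_union, Finset.mem_filter, Finset.mem_univ, true_and]
      constructor
      · rintro (hv | ⟨hvC, b, hb, hbF⟩)
        · obtain ⟨n, hn, k, h1, h2, h3⟩ := (ih v).1 hv
          exact ⟨n, by omega, k, h1, h2, h3⟩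
        · obtain ⟨n, hn, k, h1, h2, h3⟩ := (ih b).1 hbF
          refine ⟨n + 1, by omega, k, ?_, h2, ?_⟩
          · simp [pit, hb, h1]
          · intro i hi w hw
            match i with
            | 0 => simp only [pit] at hw; cases hw; exact hvC
            | i + 1 =>
                simp only [pit, hb, Option.bind_some] at hw
                exact h3 i (by omega) w hw
      · rintro ⟨n, hn, k, h1, h2, h3⟩
        match n with
        | 0 =>
            left
            exact (ih v).2 ⟨0, by omega, k, h1, h2, by omega⟩
        | n + 1 =>
            rcases Nat.lt_or_ge n t with h | h
            · left
              exact (ih v).2 ⟨n + 1, by omega, k, h1, h2, h3⟩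
            · right
              have hn' : n = t := by omega
              subst hn'
              have hvC : v ∉ C := by
                have := h3 0 (by omega) v (by simp [pit])
                exact this
              simp only [pit] at h1
              cases hb : parent v with
              | none => rw [hb] at h1; simp at h1
              | some b =>
                  rw [hb, Option.bind_some] at h1
                  refine ⟨hvC, b, rfl, (ih b).2 ⟨n, le_refl n, k, h1, h2, ?_⟩⟩
                  intro i hi w hw
                  exact h3 (i + 1) (by omega) w (by simp [pit, hb, hw])

theorem reach_short {E : Type} [Fintype E] (parent : E → Option E)
    (C K : Finset E) (v : E) :
    ∀ n k, pit parent n v = some k → k ∈ K →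
      (∀ i < n, ∀ w, pit parent i v = some w → w ∉ C) →
      ∃ n' ≤ Fintype.card E, ∃ k', pit parent n' v = some k' ∧ k' ∈ K ∧
        ∀ i < n', ∀ w, pit parent i v = some w → w ∉ C := by
  intro n
  induction n using Nat.strong_induction_on with
  | _ n IH =>
  intro k h1 h2 h3
  rcases le_or_gt n (Fintype.card E) with h | h
  · exact ⟨n, h, k, h1, h2, h3⟩
  · have hdef : ∀ i ≤ n, ∃ w, pit parent i v = some w := fun i hi => pit_isSome parent h1 hi
    have hninj : ¬ Function.Injective
        (fun i : Fin (Fintype.card E + 1) =>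
          (hdef i (by omega : (i : ℕ) ≤ n)).choose) := by
      intro hinj
      have := Fintype.card_le_of_injective _ hinj
      simp at this
    rw [Function.not_injective_iff] at hninj
    obtain ⟨i, j, hij, hne⟩ := hninj
    have key : ∃ a b : ℕ, a < b ∧ b ≤ Fintype.card E ∧
        pit parent a v = pit parent b v := by
      have hv : pit parent (i : ℕ) v = pit parent (j : ℕ) v := by
        rw [(hdef i (by omega)).choose_spec, (hdef j (by omega)).choose_spec]
        exact congrArg some hij
      have hvne : (i : ℕ) ≠ (j : ℕ) := fun h => hne (Fin.ext h)
      rcases Nat.lt_or_ge (i : ℕ) (j : ℕ) with hl | hl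
      · exact ⟨i, j, hl, by omega, hv⟩
      · exact ⟨j, i, by omega, by omega, hv.symm⟩
    obtain ⟨a, b, hab, hbcard, heq⟩ := key
    set n' := a + (n - b) with hn'
    have hbn : b ≤ n := by omega
    have hpit : ∀ m, pit parent (a + m) v = pit parent (b + m) v := by
      intro m
      rw [pit_add, pit_add, heq]
    have h1' : pit parent n' v = some k := by
      have : b + (n - b) = n := by omega
      rw [hn', hpit, this, h1]
    have h3' : ∀ i' < n', ∀ w, pit parent i' v = some w → w ∉ C := by
      intro i' hi' w hw
      rcases le_or_gt i' a with hia | hia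
      · exact h3 i' (by omega) w hw
      · have : i' = a + (i' - a) := by omega
        rw [this, hpit] at hw
        exact h3 (b + (i' - a)) (by omega) w hw
    exact IH n' (by omega) k h1' h2 h3'

theorem mem_pfinal {E : Type} [Fintype E] (parent : E → Option E)
    (C K : Finset E) (v : E) :
    v ∈ pfinal parent C K ↔ Reach parent C K v := by
  rw [pfinal, mem_pcascade]
  constructor
  · rintro ⟨n, -, k, h1, h2, h3⟩
    exact ⟨n, k, h1, h2, h3⟩
  · rintro ⟨n, k, h1, h2, h3⟩
    obtain ⟨n', hn', k', h1', h2', h3'⟩ := reach_short parent C K v n k h1 h2 h3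
    exact ⟨n', hn', k', h1', h2', h3'⟩

theorem mem_pProt {E : Type} [Fintype E] (parent : E → Option E)
    (K C : Finset E) (v : E) :
    v ∈ pProt parent K C ↔ Reach parent ∅ K v ∧ ¬ Reach parent C K v := by
  rw [pProt, Finset.mem_sdiff, mem_pfinal, mem_pfinal]

theorem reach_empty_iff {E : Type} (parent : E → Option E) (K : Finset E) (v : E) :
    Reach parent ∅ K v ↔ ∃ n, ∃ k, pit parent n v = some k ∧ k ∈ K := by
  constructor
  · rintro ⟨n, k, h1, h2, -⟩
    exact ⟨n, k, h1, h2⟩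
  · rintro ⟨n, k, h1, h2⟩
    exact ⟨n, k, h1, h2, fun i hi w hw => Finset.notMem_empty w⟩

theorem reach_hit {E : Type} (parent : E → Option E) (K C : Finset E) (v : E)
    (hv : ∃ n, ∃ k, pit parent n v = some k ∧ k ∈ K)
    (hnr : ¬ Reach parent C K v) :
    ∃ i < Nat.find hv, ∃ w ∈ C, pit parent i v = some w := by
  by_contra hcon
  push_neg at hcon
  obtain ⟨k, h1, h2⟩ := Nat.find_spec hv
  exact hnr ⟨Nat.find hv, k, h1, h2, fun i hi w hw hwC => hcon i hi w hwC hw⟩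

theorem reach_nohit {E : Type} (parent : E → Option E) (K : Finset E) (v : E)
    (hv : ∃ n, ∃ k, pit parent n v = some k ∧ k ∈ K)
    {i : ℕ} {c : E} (hic : i < Nat.find hv) (hc : pit parent i v = some c) :
    ¬ Reach parent {c} K v := by
  rintro ⟨m, k, h1, h2, h3⟩
  have hm : Nat.find hv ≤ m := Nat.find_min' hv ⟨k, h1, h2⟩
  exact h3 i (lt_of_lt_of_le hic hm) c hc (Finset.mem_singleton_self c)

theorem find_shift {E : Type} (parent : E → Option E) (K : Finset E) (w a : E)
    (iw : ℕ)
    (hw : ∃ n, ∃ k, pit parent n w = some k ∧ k ∈ K)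
    (haw : pit parent iw w = some a)
    (hlt : iw < Nat.find hw) :
    ∃ ha : ∃ n, ∃ k, pit parent n a = some k ∧ k ∈ K,
      Nat.find hw = iw + Nat.find ha := by
  have hcomp : ∀ m, pit parent (iw + m) w = pit parent m a := by
    intro m; rw [pit_add, haw, Option.bind_some]
  have hiw : iw + (Nat.find hw - iw) = Nat.find hw := by omega
  have ha : ∃ n, ∃ k, pit parent n a = some k ∧ k ∈ K := by
    obtain ⟨k, h1, h2⟩ := Nat.find_spec hw
    exact ⟨Nat.find hw - iw, k, by rw [← hcomp, hiw]; exact h1, h2⟩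
  refine ⟨ha, le_antisymm ?_ ?_⟩
  · obtain ⟨k, h1, h2⟩ := Nat.find_spec ha
    exact Nat.find_min' hw ⟨k, by rw [hcomp]; exact h1, h2⟩
  · obtain ⟨k, h1, h2⟩ := Nat.find_spec hw
    have h4 : Nat.find ha ≤ Nat.find hw - iw :=
      Nat.find_min' ha ⟨k, by rw [← hcomp, hiw]; exact h1, h2⟩
    omega

theorem prot_sub {E : Type} [Fintype E] (parent : E → Option E) (K : Finset E)
    (v a b : E)
    (hv : ∃ n, ∃ k, pit parent n v = some k ∧ k ∈ K)
    {i j : ℕ} (ha : pit parent i v = some a) (hb : pit parent j v = some b)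
    (hij : i ≤ j) (hj : j < Nat.find hv) :
    pProt parent K {a} ⊆ pProt parent K {b} := by
  have hi : i < Nat.find hv := lt_of_le_of_lt hij hj
  have hba : pit parent (j - i) a = some b := by
    have hji : i + (j - i) = j := by omega
    rw [← hji, pit_add, ha, Option.bind_some] at hb
    exact hb
  obtain ⟨haK, hshift⟩ := find_shift parent K v a i hv ha hi
  have hjlt : j - i < Nat.find haK := by omega
  intro w hw
  rw [mem_pProt] at hw ⊢
  obtain ⟨hw0, hwa⟩ := hw
  have hwex : ∃ n, ∃ k, pit parent n w = some k ∧ k ∈ K :=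
    (reach_empty_iff _ _ _).1 hw0
  obtain ⟨iw, hiwlt, x, hxa, hxpit⟩ := reach_hit parent K {a} w hwex hwa
  rw [Finset.mem_singleton] at hxa
  subst hxa
  obtain ⟨haK', hshift'⟩ := find_shift parent K w x iw hwex hxpit hiwlt
  refine ⟨hw0, ?_⟩
  have hbw : pit parent (iw + (j - i)) w = some b := by
    rw [pit_add, hxpit, Option.bind_some]
    exact hba
  have hlt2 : iw + (j - i) < Nat.find hwex := by
    rw [hshift']
    have hrfl : Nat.find haK' = Nat.find haK := rfl
    omega
  exact reach_nohit parent K w hwex hlt2 hbw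

theorem prot_laminar {E : Type} [Fintype E] (parent : E → Option E) (K : Finset E)
    (a b : E) :
    pProt parent K {a} ⊆ pProt parent K {b} ∨
    pProt parent K {b} ⊆ pProt parent K {a} ∨
    pProt parent K {a} ∩ pProt parent K {b} = ∅ := by
  by_cases hne : pProt parent K {a} ∩ pProt parent K {b} = ∅
  · exact Or.inr (Or.inr hne)
  · obtain ⟨v, hv⟩ := Finset.nonempty_iff_ne_empty.2 hne
    rw [Finset.mem_inter, mem_pProt, mem_pProt] at hv
    obtain ⟨⟨hv0, hva⟩, -, hvb⟩ := hv
    have hvex : ∃ n, ∃ k, pit parent n v = some k ∧ k ∈ K :=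
      (reach_empty_iff _ _ _).1 hv0
    obtain ⟨i, hilt, x, hxa, hxi⟩ := reach_hit parent K {a} v hvex hva
    obtain ⟨j, hjlt, y, hyb, hyj⟩ := reach_hit parent K {b} v hvex hvb
    rw [Finset.mem_singleton] at hxa hyb
    subst hxa; subst hyb
    rcases le_total i j with hij | hij
    · exact Or.inl (prot_sub parent K v x y hvex hxi hyj hij hjlt)
    · exact Or.inr (Or.inl (prot_sub parent K v y x hvex hyj hxi hij hilt))

theorem prot_biUnion {E : Type} [Fintype E] (parent : E → Option E)
    (K C : Finset E) :
    pProt parent K C = C.biUnion fun c => pProt parent K {c} := by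
  ext v
  rw [Finset.mem_biUnion, mem_pProt]
  constructor
  · rintro ⟨hv0, hvC⟩
    have hvex : ∃ n, ∃ k, pit parent n v = some k ∧ k ∈ K :=
      (reach_empty_iff _ _ _).1 hv0
    obtain ⟨i, hilt, c, hcC, hci⟩ := reach_hit parent K C v hvex hvC
    exact ⟨c, hcC, (mem_pProt _ _ _ _).2 ⟨hv0, reach_nohit parent K v hvex hilt hci⟩⟩
  · rintro ⟨c, hcC, hc⟩
    rw [mem_pProt] at hc
    exact ⟨hc.1, fun hr => hc.2 (reach_mono parent (Finset.singleton_subset_iff.2 hcC) hr)⟩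

theorem prot_disjoint {E : Type} [Fintype E] (parent : E → Option E)
    (K : Finset E) (a a' : E)
    (h : ¬ ∃ r : E, pAnc parent r a ∧ pAnc parent r a') :
    pProt parent K {a} ∩ pProt parent K {a'} = ∅ := by
  by_contra hne
  obtain ⟨v, hv⟩ := Finset.nonempty_iff_ne_empty.2 hne
  rw [Finset.mem_inter, mem_pProt, mem_pProt] at hv
  obtain ⟨⟨hv0, hva⟩, -, hvb⟩ := hv
  have hvex : ∃ n, ∃ k, pit parent n v = some k ∧ k ∈ K :=
    (reach_empty_iff _ _ _).1 hv0
  obtain ⟨i, hilt, x, hxa, hxi⟩ := reach_hit parent K {a} v hvex hva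
  obtain ⟨j, hjlt, y, hyb, hyj⟩ := reach_hit parent K {a'} v hvex hvb
  rw [Finset.mem_singleton] at hxa hyb
  subst hxa; subst hyb
  apply h
  rcases le_total i j with hij | hij
  · have : pit parent (j - i) x = some y := by
      have hji : i + (j - i) = j := by omega
      rw [← hji, pit_add, hxi, Option.bind_some] at hyj
      exact hyj
    exact ⟨y, pAnc_of_pit parent _ x y this, Relation.ReflTransGen.refl⟩
  · have : pit parent (i - j) y = some x := by
      have hji : j + (i - j) = i := by omega
      rw [← hji, pit_add, hyj, Option.bind_some] at hxi
      exact hxi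
    exact ⟨x, Relation.ReflTransGen.refl, pAnc_of_pit parent _ y x this⟩

theorem greedy_lemma {E : Type} [Fintype E] (P : E → Finset E)
    (hLam : ∀ a b, P a ⊆ P b ∨ P b ⊆ P a ∨ P a ∩ P b = ∅)
    (S : ℕ) (g : ℕ → E) (G : ℕ → Finset E)
    (hG0 : G 0 = ∅) (hGs : ∀ k, G (k + 1) = insert (g k) (G k))
    (hgr : ∀ k < S, ∀ d,
      ((insert d (G k)).biUnion P).card ≤ ((G (k + 1)).biUnion P).card) :
    ∀ C : Finset E, C.card = S → (C.biUnion P).card ≤ ((G S).biUnion P).card := by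
  have main : ∀ j k, k + j = S → ∀ D : Finset E, D.card = j →
      ((D ∪ G k).biUnion P).card ≤ ((G S).biUnion P).card := by
    intro j
    induction j with
    | zero =>
        intro k hk D hD
        rw [Finset.card_eq_zero.1 hD, Finset.empty_union]
        have : k = S := by omega
        rw [this]
    | succ j ihj =>
        intro k hk D hD
        have hkS : k < S := by omega
        have hDne : D.Nonempty := by
          rw [← Finset.card_pos, hD]; omega
        set U := (G k).biUnion P with hU
        have hgr' : ∀ d, (P d ∪ U).card ≤ (P (g k) ∪ U).card := by
          intro d
          have h := hgr k hkS d
          rwa [Finset.biUnion_insert, hGs k, Finset.biUnion_insert] at h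
        have hmarg : ∀ d, (P d \ U).card ≤ (P (g k) \ U).card := by
          intro d
          have h1 := Finset.card_sdiff_add_card (s := P d) (t := U)
          have h2 := Finset.card_sdiff_add_card (s := P (g k)) (t := U)
          have := hgr' d
          omega
        by_cases hcase : ∃ d ∈ D, P d \ U ⊆ P (g k) \ U
        · obtain ⟨d, hdD, hsub⟩ := hcase
          have hsubset : (D ∪ G k).biUnion P ⊆
              ((D.erase d) ∪ G (k + 1)).biUnion P := by
            intro x hx
            rw [Finset.mem_biUnion] at hx ⊢
            obtain ⟨c, hc1, hc2⟩ := hx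
            rcases Finset.mem_union.1 hc1 with hcD | hcG
            · by_cases hcd : c = d
              · subst hcd
                by_cases hxU : x ∈ U
                · rw [hU, Finset.mem_biUnion] at hxU
                  obtain ⟨c', hc'1, hc'2⟩ := hxU
                  exact ⟨c', Finset.mem_union_right _
                    (by rw [hGs k]; exact Finset.mem_insert_of_mem hc'1), hc'2⟩
                · have : x ∈ P (g k) \ U := hsub (Finset.mem_sdiff.2 ⟨hc2, hxU⟩)
                  exact ⟨g k, Finset.mem_union_right _
                    (by rw [hGs k]; exact Finset.mem_insert_self _ _),
                    (Finset.mem_sdiff.1 this).1⟩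
              · exact ⟨c, Finset.mem_union_left _ (Finset.mem_erase.2 ⟨hcd, hcD⟩), hc2⟩
            · exact ⟨c, Finset.mem_union_right _
                (by rw [hGs k]; exact Finset.mem_insert_of_mem hcG), hc2⟩
          calc ((D ∪ G k).biUnion P).card
              ≤ (((D.erase d) ∪ G (k + 1)).biUnion P).card :=
                Finset.card_le_card hsubset
            _ ≤ ((G S).biUnion P).card :=
                ihj (k + 1) (by omega) (D.erase d)
                  (by rw [Finset.card_erase_of_mem hdD, hD]; omega)
        · push_neg at hcase
          have hdisj : ∀ d ∈ D, P d ∩ P (g k) = ∅ := by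
            intro d hd
            rcases hLam d (g k) with h | h | h
            · exact absurd (Finset.sdiff_subset_sdiff h (Finset.Subset.refl U))
                (hcase d hd)
            · have h1 : P (g k) \ U ⊆ P d \ U :=
                Finset.sdiff_subset_sdiff h (Finset.Subset.refl U)
              have h2 := Finset.eq_of_subset_of_card_le h1 (hmarg d)
              exact absurd (by rw [h2]) (hcase d hd)
            · exact h
          obtain ⟨d, hdD⟩ := hDne
          set A := ((D.erase d) ∪ G k).biUnion P with hA
          have hUA : U ⊆ A := by
            intro x hx
            rw [hU, Finset.mem_biUnion] at hx
            obtain ⟨c, hc1, hc2⟩ := hx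
            exact Finset.mem_biUnion.2 ⟨c, Finset.mem_union_right _ hc1, hc2⟩
          have hsetD : D ∪ G k = insert d (D.erase d ∪ G k) := by
            rw [← Finset.insert_union, Finset.insert_erase hdD]
          have hDA : (D ∪ G k).biUnion P = P d ∪ A := by
            rw [hsetD, Finset.biUnion_insert, hA]
          have hGA : ((D.erase d) ∪ G (k + 1)).biUnion P = P (g k) ∪ A := by
            rw [hGs k, Finset.union_insert, Finset.biUnion_insert, hA]
          have h3 : P d \ A ⊆ P d \ U :=
            Finset.sdiff_subset_sdiff (Finset.Subset.refl _) hUA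
          have h4 : P (g k) \ U ⊆ P (g k) \ A := by
            intro x hx
            rw [Finset.mem_sdiff] at hx ⊢
            refine ⟨hx.1, fun hxA => ?_⟩
            rw [hA, Finset.mem_biUnion] at hxA
            obtain ⟨c, hc1, hc2⟩ := hxA
            rcases Finset.mem_union.1 hc1 with hcD | hcG
            · have hcD' : c ∈ D := Finset.mem_of_mem_erase hcD
              have : x ∈ P c ∩ P (g k) := Finset.mem_inter.2 ⟨hc2, hx.1⟩
              rw [hdisj c hcD'] at this
              exact absurd this (Finset.notMem_empty x)
            · exact hx.2 (Finset.mem_biUnion.2 ⟨c, hcG, hc2⟩)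
          have e1 := Finset.card_sdiff_add_card (s := P d) (t := A)
          have e2 := Finset.card_sdiff_add_card (s := P (g k)) (t := A)
          have c3 := Finset.card_le_card h3
          have c4 := Finset.card_le_card h4
          have c5 := hmarg d
          have hle : ((D ∪ G k).biUnion P).card ≤
              (((D.erase d) ∪ G (k + 1)).biUnion P).card := by
            rw [hDA, hGA]
            omega
          exact le_trans hle
            (ihj (k + 1) (by omega) (D.erase d)
              (by rw [Finset.card_erase_of_mem hdD, hD]; omega))
  intro C hC
  have h := main S 0 (by omega) C hC
  rwa [hG0, Finset.union_empty] at h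

/-- In a network where every IDR is `a ← b` and each entity appears on at most
one right-hand side (so the dependency graph is a forest), the protection sets
of modifications to IDRs lying in different trees are disjoint, and the greedy
algorithm that repeatedly adds the IDR whose modification protects the most
entities is optimal for the AEAP: for any greedy sequence `G 0 = ∅`,
`G (k+1) = insert (g k) (G k)` in which each pick maximizes the protection,
`G S` protects at least as many entities as any set of `S` modifications. -/
theorem forest_greedy_optimal {E : Type} [Fintype E] (parent : E → Option E)
    (K : Finset E)
    (huniq : ∀ a a' b : E, parent a = some b → parent a' = some b → a = a') :
    (∀ a a' : E, (¬ ∃ r : E, pAnc parent r a ∧ pAnc parent r a') →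
      pProt parent K {a} ∩ pProt parent K {a'} = ∅) ∧
    (∀ (S : ℕ) (g : ℕ → E) (G : ℕ → Finset E),
      G 0 = ∅ → (∀ k, G (k + 1) = insert (g k) (G k)) →
      (∀ k < S, ∀ d : E,
        (pProt parent K (insert d (G k))).card ≤
          (pProt parent K (G (k + 1))).card) →
      ∀ C : Finset E, C.card = S →
        (pProt parent K C).card ≤ (pProt parent K (G S)).card) := by
  constructor
  · exact fun a a' h => prot_disjoint parent K a a' h
  · intro S g G hG0 hGs hgr C hC
    have hgr' : ∀ k < S, ∀ d,
        ((insert d (G k)).biUnion fun c => pProt parent K {c}).card ≤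
          ((G (k + 1)).biUnion fun c => pProt parent K {c}).card := by
      intro k hk d
      have h := hgr k hk d
      rwa [prot_biUnion, prot_biUnion] at h
    have h := greedy_lemma (fun c => pProt parent K {c})
      (fun a b => prot_laminar parent K a b) S g G hG0 hGs hgr' C hC
    rwa [prot_biUnion, prot_biUnion]
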